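/- The formal power series f(t) = ∑_{n≥0} (−1)^n (binom(2n,n)²/16^n) t^n satisfies Θ²f + t·(Θ + 1/2)²f = 0, where Θ = t·d/dt; equivalently its coefficients satisfy (n+1)² a_{n+1} = −(n+1/2)² a_n. -/

import Mathlib

/-- The logarithmic derivative `Θ = t·d/dt` on formal power series. -/
noncomputable def thetaPS (f : PowerSeries ℚ) : PowerSeries ℚ :=
  PowerSeries.mk fun n => (n : ℚ) * PowerSeries.coeff n f

open PowerSeries

@[simp]
lemma coeff_thetaPS (n : ℕ) (f : PowerSeries ℚ) : coeff n (thetaPS f) = n * coeff n f :=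
  coeff_mk _ _

/-- With `(Θ + 1/2)² = Θ² + Θ + 1/4`, the coefficient of `t^(n+1)` on the left is
`(n+1)² aₙ₊₁ + (n+1/2)² aₙ`. -/
lemma thetaPS_sq_add_X_mul_eq_zero_of_recurrence (a : ℕ → ℚ)
    (h : ∀ n : ℕ, ((n : ℚ) + 1)^2 * a (n + 1) = -((n : ℚ) + 1/2)^2 * a n) :
    thetaPS (thetaPS (mk a))
      + X * (thetaPS (thetaPS (mk a)) + thetaPS (mk a) + C (1/4 : ℚ) * mk a) = 0 := by
  ext (_ | n)
  · simp [thetaPS]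
  · simp only [map_add, coeff_thetaPS, coeff_succ_X_mul, coeff_C_mul, coeff_mk, map_zero]
    push_cast
    linear_combination h n

lemma succ_mul_centralBinom_succ_cast (n : ℕ) :
    ((n : ℚ) + 1) * (Nat.centralBinom (n + 1) : ℚ) = 2 * (2 * n + 1) * Nat.centralBinom n := by
  exact_mod_cast Nat.succ_mul_centralBinom_succ n

lemma signed_centralBinom_sq_div_sixteen_pow_recurrence (n : ℕ) :
    ((n : ℚ) + 1)^2 * ((-1)^(n+1) * ((Nat.choose (2*(n+1)) (n+1) : ℚ))^2 / 16^(n+1))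
        = -((n : ℚ) + 1/2)^2 * ((-1)^n * ((Nat.choose (2*n) n : ℚ))^2 / 16^n) := by
  have hstep := congrArg (· ^ 2) (succ_mul_centralBinom_succ_cast n)
  simp only [Nat.centralBinom, mul_pow] at hstep
  rw [pow_succ (-1 : ℚ), pow_succ (16 : ℚ)]
  field_simp
  linear_combination (-4) * hstep

/-- The series `f = ∑ (−1)ⁿ binom(2n,n)²/16ⁿ tⁿ` satisfies `Θ²f + t·(Θ+1/2)²f = 0`;
equivalently `(n+1)² a_{n+1} = −(n+1/2)² a_n`. -/
theorem stmt1 :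
    (thetaPS (thetaPS (PowerSeries.mk fun n => (-1)^n * ((Nat.choose (2*n) n : ℚ))^2 / 16^n))
      + PowerSeries.X *
        (thetaPS (thetaPS (PowerSeries.mk fun n => (-1)^n * ((Nat.choose (2*n) n : ℚ))^2 / 16^n))
          + thetaPS (PowerSeries.mk fun n => (-1)^n * ((Nat.choose (2*n) n : ℚ))^2 / 16^n)
          + PowerSeries.C (1/4 : ℚ)
            * PowerSeries.mk fun n => (-1)^n * ((Nat.choose (2*n) n : ℚ))^2 / 16^n) = 0)
    ∧ ∀ n : ℕ, ((n : ℚ) + 1)^2 * ((-1)^(n+1) * ((Nat.choose (2*(n+1)) (n+1) : ℚ))^2 / 16^(n+1))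
        = -((n : ℚ) + 1/2)^2 * ((-1)^n * ((Nat.choose (2*n) n : ℚ))^2 / 16^n) :=
  ⟨thetaPS_sq_add_X_mul_eq_zero_of_recurrence _ signed_centralBinom_sq_div_sixteen_pow_recurrence,
    signed_centralBinom_sq_div_sixteen_pow_recurrence⟩
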